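/- Let −1/2 < ν < 1 and set C_{ν1} = min{1−ν, 1+2ν} and C_{ν2} = max{1−ν, 1+2ν}. Let F : ℝ³ → [0,∞) be measurable with ∫F(v)(1+|v|²)dv < ∞ and ρ := ∫F dv > 0, and define U, Θ, T and 𝒯_ν = (1−ν)T·Id + νΘ as the associated macroscopic fields. If in addition T > 0, then 𝒯_ν is invertible, and for every k ∈ ℝ³: (C_{ν2}⁻¹/T)·|k|² ≤ kᵀ𝒯_ν⁻¹ k ≤ (C_{ν1}⁻¹/T)·|k|². -/

import Mathlib

/-!
The quadratic form of `𝒯_ν` is `(1 - ν) T |k|² + ν kᵀΘk`, and `0 ≤ kᵀΘk ≤ tr Θ |k|² = 3 T |k|²`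
(Cauchy–Schwarz under the integral), so it lies between `C_{ν1} T |k|²` and `C_{ν2} T |k|²`.
For a symmetric `A` with `a |x|² ≤ xᵀAx ≤ b |x|²` and `a > 0`, writing `k = A y` gives
`b⁻¹ |k|² ≤ kᵀA⁻¹k ≤ a⁻¹ |k|²`: the upper bound from expanding `0 ≤ |a y - k|²`, the lower one
from expanding `0 ≤ (b⁻¹ k - y)ᵀ A (b⁻¹ k - y)`.
-/

open MeasureTheory Matrix

/-- Macroscopic density `ρ = ∫ F dv`. -/
noncomputable def density (F : (Fin 3 → ℝ) → ℝ) : ℝ := ∫ v : Fin 3 → ℝ, F v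

/-- Bulk velocity `U = ρ⁻¹ ∫ F v dv`. -/
noncomputable def bulkVel (F : (Fin 3 → ℝ) → ℝ) : Fin 3 → ℝ := fun i =>
  (∫ v : Fin 3 → ℝ, F v * v i) / density F

/-- Stress tensor `Θ = ρ⁻¹ ∫ F (v−U)⊗(v−U) dv`. -/
noncomputable def stress (F : (Fin 3 → ℝ) → ℝ) : Matrix (Fin 3) (Fin 3) ℝ :=
  Matrix.of fun i j =>
    (∫ v : Fin 3 → ℝ, F v * (v i - bulkVel F i) * (v j - bulkVel F j)) / density F

/-- Temperature `T = (1/3) tr Θ`. -/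
noncomputable def temp (F : (Fin 3 → ℝ) → ℝ) : ℝ := (stress F).trace / 3

/-- ES-BGK temperature tensor `𝒯_ν = (1−ν)T·Id + νΘ`. -/
noncomputable def tempTensor (ν : ℝ) (F : (Fin 3 → ℝ) → ℝ) : Matrix (Fin 3) (Fin 3) ℝ :=
  ((1 - ν) * temp F) • (1 : Matrix (Fin 3) (Fin 3) ℝ) + ν • stress F

section QuadraticForm

variable {n : Type*} [Fintype n]

lemma dotProduct_self_nonneg (x : n → ℝ) : 0 ≤ x ⬝ᵥ x :=
  Finset.sum_nonneg fun i _ => mul_self_nonneg (x i)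

lemma dotProduct_self_eq_sum_sq (x : n → ℝ) : x ⬝ᵥ x = ∑ i, x i ^ 2 := by
  simp only [dotProduct, sq]

lemma dotProduct_mulVec_le_inv_mul_dotProduct_self {A : Matrix n n ℝ} {a : ℝ} (ha : 0 < a)
    (hA : ∀ x, a * (x ⬝ᵥ x) ≤ x ⬝ᵥ (A *ᵥ x)) (y : n → ℝ) :
    (A *ᵥ y) ⬝ᵥ y ≤ a⁻¹ * ((A *ᵥ y) ⬝ᵥ (A *ᵥ y)) := by
  set k := A *ᵥ y
  have hy : a * (y ⬝ᵥ y) ≤ k ⬝ᵥ y := (hA y).trans_eq (dotProduct_comm _ _)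
  have hsq : 0 ≤ a ^ 2 * (y ⬝ᵥ y) - 2 * a * (k ⬝ᵥ y) + k ⬝ᵥ k := by
    have := dotProduct_self_nonneg (a • y - k)
    simp only [sub_dotProduct, dotProduct_sub, smul_dotProduct, dotProduct_smul, smul_eq_mul,
      dotProduct_comm y k] at this
    linarith
  rw [le_inv_mul_iff₀ ha]
  nlinarith

lemma inv_mul_dotProduct_self_le_dotProduct_mulVec {A : Matrix n n ℝ} (hA : A.IsSymm) {b : ℝ}
    (hpos : ∀ x, 0 ≤ x ⬝ᵥ (A *ᵥ x)) (hb : ∀ x, x ⬝ᵥ (A *ᵥ x) ≤ b * (x ⬝ᵥ x)) (y : n → ℝ) :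
    b⁻¹ * ((A *ᵥ y) ⬝ᵥ (A *ᵥ y)) ≤ (A *ᵥ y) ⬝ᵥ y := by
  set k := A *ᵥ y
  set x := b⁻¹ • k
  have hsymm : y ⬝ᵥ (A *ᵥ x) = x ⬝ᵥ k := by
    rw [dotProduct_mulVec, ← mulVec_transpose, hA.eq, dotProduct_comm]
  have hx : x ⬝ᵥ (A *ᵥ x) ≤ b⁻¹ * (k ⬝ᵥ k) := by
    calc x ⬝ᵥ (A *ᵥ x) ≤ b * (x ⬝ᵥ x) := hb x
      _ = b⁻¹ * b⁻¹ * b * (k ⬝ᵥ k) := by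
        simp only [x, smul_dotProduct, dotProduct_smul, smul_eq_mul]; ring
      _ = b⁻¹ * (k ⬝ᵥ k) := by
        rw [show b⁻¹ * b⁻¹ * b = b⁻¹ by simpa using mul_self_mul_inv b⁻¹]
  have := hpos (x - y)
  simp only [sub_dotProduct, dotProduct_sub, mulVec_sub, hsymm] at this
  simp only [x, smul_dotProduct, smul_eq_mul] at this hx ⊢
  nlinarith [dotProduct_comm y k]

theorem Matrix.IsSymm.isUnit_and_dotProduct_inv_mulVec_bounds [DecidableEq n]
    {A : Matrix n n ℝ} (hA : A.IsSymm) {a b : ℝ} (ha : 0 < a)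
    (hlo : ∀ x, a * (x ⬝ᵥ x) ≤ x ⬝ᵥ (A *ᵥ x))
    (hhi : ∀ x, x ⬝ᵥ (A *ᵥ x) ≤ b * (x ⬝ᵥ x)) :
    IsUnit A ∧ ∀ k, b⁻¹ * (k ⬝ᵥ k) ≤ k ⬝ᵥ (A⁻¹ *ᵥ k) ∧ k ⬝ᵥ (A⁻¹ *ᵥ k) ≤ a⁻¹ * (k ⬝ᵥ k) := by
  have hunit : IsUnit A := by
    refine (PosDef.of_dotProduct_mulVec_pos ((conjTranspose_eq_transpose_of_trivial A).trans hA)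
      fun x hx => ?_).isUnit
    have hxx : 0 < x ⬝ᵥ x :=
      (dotProduct_self_nonneg x).lt_of_ne' (dotProduct_self_eq_zero.not.mpr hx)
    simpa using (mul_pos ha hxx).trans_le (hlo x)
  refine ⟨hunit, fun k => ?_⟩
  have hk : A *ᵥ (A⁻¹ *ᵥ k) = k := by
    rw [mulVec_mulVec, mul_nonsing_inv _ ((isUnit_iff_isUnit_det A).mp hunit), one_mulVec]
  have hpos x : 0 ≤ x ⬝ᵥ (A *ᵥ x) := (mul_nonneg ha.le (dotProduct_self_nonneg x)).trans (hlo x)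
  have lower := inv_mul_dotProduct_self_le_dotProduct_mulVec hA hpos hhi (A⁻¹ *ᵥ k)
  have upper := dotProduct_mulVec_le_inv_mul_dotProduct_self ha hlo (A⁻¹ *ᵥ k)
  rw [hk] at lower upper
  exact ⟨lower, upper⟩

end QuadraticForm

lemma abs_sub_mul_sub_le {ι : Type*} [Fintype ι] (v : ι → ℝ) (i j : ι) (a b : ℝ) :
    |(v i - a) * (v j - b)| ≤ (2 + a ^ 2 + b ^ 2) * (1 + ∑ l, v l ^ 2) := by
  have hi : v i ^ 2 ≤ ∑ l, v l ^ 2 :=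
    Finset.single_le_sum (f := fun l => v l ^ 2) (fun l _ => sq_nonneg _) (Finset.mem_univ i)
  have hj : v j ^ 2 ≤ ∑ l, v l ^ 2 :=
    Finset.single_le_sum (f := fun l => v l ^ 2) (fun l _ => sq_nonneg _) (Finset.mem_univ j)
  -- `|xy| ≤ (x² + y²)/2` and `(v - a)² ≤ 2v² + 2a²`
  rw [abs_mul]
  nlinarith [sq_nonneg (|v i - a| - |v j - b|), sq_abs (v i - a), sq_abs (v j - b),
    sq_nonneg (v i + a), sq_nonneg (v j + b), sq_nonneg a, sq_nonneg b]

lemma integrable_mul_sub_mul_sub {ι : Type*} [Fintype ι] {μ : Measure (ι → ℝ)} {F : (ι → ℝ) → ℝ}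
    (hF : AEStronglyMeasurable F μ) (hFint : Integrable (fun v => F v * (1 + ∑ i, v i ^ 2)) μ)
    (i j : ι) (a b : ℝ) : Integrable (fun v => F v * (v i - a) * (v j - b)) μ := by
  refine (hFint.const_mul (2 + a ^ 2 + b ^ 2)).mono ?_ (ae_of_all _ fun v => ?_)
  · exact (hF.mul ((continuous_apply i).sub continuous_const).aestronglyMeasurable).mul
      ((continuous_apply j).sub continuous_const).aestronglyMeasurable
  · have h1 : 0 ≤ 1 + ∑ l, v l ^ 2 := by positivity
    simp only [Real.norm_eq_abs, mul_assoc, abs_mul (F v), abs_mul (2 + a ^ 2 + b ^ 2),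
      abs_of_nonneg h1, abs_of_nonneg (by positivity : (0 : ℝ) ≤ 2 + a ^ 2 + b ^ 2)]
    rw [mul_left_comm]
    exact mul_le_mul_of_nonneg_left (abs_sub_mul_sub_le v i j a b) (abs_nonneg _)

lemma isSymm_stress (F : (Fin 3 → ℝ) → ℝ) : (stress F).IsSymm := by
  ext i j
  simp only [transpose_apply, stress, of_apply, mul_right_comm (F _)]

section Stress

variable {F : (Fin 3 → ℝ) → ℝ}

lemma dotProduct_stress_mulVec (hF : Measurable F)
    (hFint : Integrable (fun v : Fin 3 → ℝ => F v * (1 + ∑ i, v i ^ 2))) (k : Fin 3 → ℝ) :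
    k ⬝ᵥ (stress F *ᵥ k)
      = (∫ v, F v * (∑ i, k i * (v i - bulkVel F i)) ^ 2) / density F := by
  have hint i j := (integrable_mul_sub_mul_sub hF.aestronglyMeasurable hFint i j
    (bulkVel F i) (bulkVel F j)).const_mul (k i * k j)
  have hexpand : (fun v : Fin 3 → ℝ => F v * (∑ i, k i * (v i - bulkVel F i)) ^ 2)
      = fun v => ∑ i, ∑ j, k i * k j * (F v * (v i - bulkVel F i) * (v j - bulkVel F j)) := by
    ext v
    rw [sq, Finset.sum_mul_sum, Finset.mul_sum]
    refine Finset.sum_congr rfl fun i _ => ?_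
    rw [Finset.mul_sum]
    exact Finset.sum_congr rfl fun j _ => by ring
  rw [hexpand, integral_finsetSum _ fun i _ => integrable_finsetSum _ fun j _ => hint i j,
    Finset.sum_div]
  refine Finset.sum_congr rfl fun i _ => ?_
  rw [integral_finsetSum _ fun j _ => hint i j, Finset.sum_div, mulVec, dotProduct,
    Finset.mul_sum]
  refine Finset.sum_congr rfl fun j _ => ?_
  rw [integral_const_mul, stress, of_apply]
  ring

lemma trace_stress (hF : Measurable F)
    (hFint : Integrable (fun v : Fin 3 → ℝ => F v * (1 + ∑ i, v i ^ 2))) :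
    (stress F).trace = (∫ v, F v * ∑ i, (v i - bulkVel F i) ^ 2) / density F := by
  simp only [Finset.mul_sum, sq, ← mul_assoc]
  rw [integral_finsetSum _ fun i _ => integrable_mul_sub_mul_sub hF.aestronglyMeasurable hFint
    i i (bulkVel F i) (bulkVel F i), Finset.sum_div]
  rfl

lemma dotProduct_stress_mulVec_nonneg (hF : Measurable F) (hFnonneg : ∀ v, 0 ≤ F v)
    (hFint : Integrable (fun v : Fin 3 → ℝ => F v * (1 + ∑ i, v i ^ 2))) (k : Fin 3 → ℝ) :
    0 ≤ k ⬝ᵥ (stress F *ᵥ k) := by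
  rw [dotProduct_stress_mulVec hF hFint]
  exact div_nonneg (integral_nonneg fun v => mul_nonneg (hFnonneg v) (sq_nonneg _))
    (integral_nonneg hFnonneg)

lemma dotProduct_stress_mulVec_le (hF : Measurable F) (hFnonneg : ∀ v, 0 ≤ F v)
    (hFint : Integrable (fun v : Fin 3 → ℝ => F v * (1 + ∑ i, v i ^ 2))) (k : Fin 3 → ℝ) :
    k ⬝ᵥ (stress F *ᵥ k) ≤ (stress F).trace * (k ⬝ᵥ k) := by
  have hint i j := integrable_mul_sub_mul_sub hF.aestronglyMeasurable hFint i j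
    (bulkVel F i) (bulkVel F j)
  have hcs : (∫ v, F v * (∑ i, k i * (v i - bulkVel F i)) ^ 2)
      ≤ (∫ v, F v * ∑ i, (v i - bulkVel F i) ^ 2) * (k ⬝ᵥ k) := by
    rw [← integral_mul_const]
    refine integral_mono_of_nonneg (ae_of_all _ fun v => mul_nonneg (hFnonneg v) (sq_nonneg _))
      ?_ (ae_of_all _ fun v => ?_)
    · simp only [Finset.mul_sum, Finset.sum_mul, sq, ← mul_assoc]
      exact integrable_finsetSum _ fun i _ => (hint i i).mul_const _
    · rw [dotProduct_self_eq_sum_sq]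
      exact (mul_le_mul_of_nonneg_left (Finset.sum_mul_sq_le_sq_mul_sq Finset.univ k
        fun i => v i - bulkVel F i) (hFnonneg v)).trans_eq (by ring)
  rw [dotProduct_stress_mulVec hF hFint, trace_stress hF hFint, div_mul_eq_mul_div]
  exact div_le_div_of_nonneg_right hcs (integral_nonneg hFnonneg)

end Stress

lemma one_sub_mul_add_mul_mem_Icc {ν s q : ℝ} (hq₀ : 0 ≤ q) (hq : q ≤ 3 * s) :
    (1 - ν) * s + ν * q ∈
      Set.Icc (min (1 - ν) (1 + 2 * ν) * s) (max (1 - ν) (1 + 2 * ν) * s) := by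
  have hs : 0 ≤ s := by linarith
  have hmin₁ := mul_le_mul_of_nonneg_right (min_le_left (1 - ν) (1 + 2 * ν)) hs
  have hmin₂ := mul_le_mul_of_nonneg_right (min_le_right (1 - ν) (1 + 2 * ν)) hs
  have hmax₁ := mul_le_mul_of_nonneg_right (le_max_left (1 - ν) (1 + 2 * ν)) hs
  have hmax₂ := mul_le_mul_of_nonneg_right (le_max_right (1 - ν) (1 + 2 * ν)) hs
  rcases le_total 0 ν with hν | hν
  · constructor <;> nlinarith
  · constructor <;> nlinarith

lemma isSymm_tempTensor (ν : ℝ) (F : (Fin 3 → ℝ) → ℝ) : (tempTensor ν F).IsSymm := by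
  simp only [tempTensor, IsSymm, transpose_add, transpose_smul, transpose_one,
    (isSymm_stress F).eq]

lemma dotProduct_tempTensor_mulVec (ν : ℝ) (F : (Fin 3 → ℝ) → ℝ) (k : Fin 3 → ℝ) :
    k ⬝ᵥ (tempTensor ν F *ᵥ k) = (1 - ν) * (temp F * (k ⬝ᵥ k)) + ν * (k ⬝ᵥ (stress F *ᵥ k)) := by
  simp only [tempTensor, add_mulVec, smul_mulVec, one_mulVec, dotProduct_add, dotProduct_smul,
    smul_eq_mul, mul_assoc]

lemma dotProduct_tempTensor_mulVec_mem_Icc (ν : ℝ) {F : (Fin 3 → ℝ) → ℝ} (hF : Measurable F)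
    (hFnonneg : ∀ v, 0 ≤ F v)
    (hFint : Integrable (fun v : Fin 3 → ℝ => F v * (1 + ∑ i, v i ^ 2))) (k : Fin 3 → ℝ) :
    k ⬝ᵥ (tempTensor ν F *ᵥ k) ∈ Set.Icc (min (1 - ν) (1 + 2 * ν) * temp F * (k ⬝ᵥ k))
      (max (1 - ν) (1 + 2 * ν) * temp F * (k ⬝ᵥ k)) := by
  have hle : k ⬝ᵥ (stress F *ᵥ k) ≤ 3 * (temp F * (k ⬝ᵥ k)) := by
    rw [temp, ← mul_assoc, mul_div_cancel₀ _ three_ne_zero]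
    exact dotProduct_stress_mulVec_le hF hFnonneg hFint k
  simpa only [dotProduct_tempTensor_mulVec, mul_assoc] using
    one_sub_mul_add_mul_mem_Icc (ν := ν) (dotProduct_stress_mulVec_nonneg hF hFnonneg hFint k) hle

theorem tempTensor_inv_comparable_general (ν : ℝ) (hν1 : -(1/2) < ν) (hν2 : ν < 1)
    (F : (Fin 3 → ℝ) → ℝ) (hFmeas : Measurable F) (hFnonneg : ∀ v, 0 ≤ F v)
    (hFint : Integrable (fun v : Fin 3 → ℝ => F v * (1 + ∑ i, (v i)^2)) volume)
    (hT : 0 < temp F) :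
    IsUnit (tempTensor ν F) ∧
    ∀ k : Fin 3 → ℝ,
      (max (1 - ν) (1 + 2*ν))⁻¹ / temp F * (∑ i, (k i)^2)
          ≤ k ⬝ᵥ ((tempTensor ν F)⁻¹ *ᵥ k) ∧
      k ⬝ᵥ ((tempTensor ν F)⁻¹ *ᵥ k)
          ≤ (min (1 - ν) (1 + 2*ν))⁻¹ / temp F * (∑ i, (k i)^2) := by
  have hmin : 0 < min (1 - ν) (1 + 2 * ν) := lt_min (by linarith) (by linarith)
  have hbounds := dotProduct_tempTensor_mulVec_mem_Icc ν hFmeas hFnonneg hFint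
  obtain ⟨hunit, hinv⟩ := (isSymm_tempTensor ν F).isUnit_and_dotProduct_inv_mulVec_bounds
    (mul_pos hmin hT) (fun k => (hbounds k).1) (fun k => (hbounds k).2)
  refine ⟨hunit, fun k => ?_⟩
  simpa only [mul_inv, ← div_eq_mul_inv, dotProduct_self_eq_sum_sq] using hinv k

/-- For `−1/2 < ν < 1` and positive temperature, the temperature tensor is invertible and
`(C_{ν2}⁻¹/T)|k|² ≤ kᵀ𝒯_ν⁻¹ k ≤ (C_{ν1}⁻¹/T)|k|²` with `C_{ν1} = min{1−ν, 1+2ν}`,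
`C_{ν2} = max{1−ν, 1+2ν}`. -/
theorem tempTensor_inv_comparable (ν : ℝ) (hν1 : -(1/2) < ν) (hν2 : ν < 1)
    (F : (Fin 3 → ℝ) → ℝ) (hFmeas : Measurable F) (hFnonneg : ∀ v, 0 ≤ F v)
    (hFint : Integrable (fun v : Fin 3 → ℝ => F v * (1 + ∑ i, (v i)^2)) volume)
    (hρ : 0 < density F) (hT : 0 < temp F) :
    IsUnit (tempTensor ν F) ∧
    ∀ k : Fin 3 → ℝ,
      (max (1 - ν) (1 + 2*ν))⁻¹ / temp F * (∑ i, (k i)^2)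
          ≤ k ⬝ᵥ ((tempTensor ν F)⁻¹ *ᵥ k) ∧
      k ⬝ᵥ ((tempTensor ν F)⁻¹ *ᵥ k)
          ≤ (min (1 - ν) (1 + 2*ν))⁻¹ / temp F * (∑ i, (k i)^2) :=
  tempTensor_inv_comparable_general ν hν1 hν2 F hFmeas hFnonneg hFint hT
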